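/- arXiv:1505.01325 — 4 statements merged into one kernel-verified Lean document; each statement's English description precedes it below -/
import Mathlib

section
/- Let n ≥ 1 and let A be an n×n real antisymmetric matrix (Aᵀ = −A, so in particular all diagonal entries are 0). Let W be the subspace of n×n real matrices B that are additively consistent, i.e. B i j + B j k = B i k for all i, j, k, and let A' be the orthogonal projection of A onto W with respect to the Frobenius inner product ⟪X, Y⟫ = ∑_{i,j} X i j · Y i j. Then for every row index i, the arithmetic mean of the i-th row of A' equals the arithmetic mean of the i-th row of A, i.e. ∑_j A' i j = ∑_j A i j for all i. -/
open Matrix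

/-- For an antisymmetric real `n × n` matrix `A` (with `n ≥ 1`), the
orthogonal projection `A'` of `A` (w.r.t. the Frobenius inner product
`⟪X, Y⟫ = ∑ i j, X i j * Y i j`) onto the subspace of additively consistent
matrices has the same row arithmetic means (equivalently, row sums) as `A`.
The orthogonal projection is characterized by: `A'` is additively consistent and
`A - A'` is Frobenius-orthogonal to every additively consistent matrix. -/
theorem stmt_0 (n : ℕ) (hn : 1 ≤ n) (A A' : Matrix (Fin n) (Fin n) ℝ)
    (hA : Aᵀ = -A)
    (hA'mem : ∀ i j k, A' i j + A' j k = A' i k)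
    (hA'proj : ∀ B : Matrix (Fin n) (Fin n) ℝ,
      (∀ i j k, B i j + B j k = B i k) →
      ∑ i, ∑ j, (A i j - A' i j) * B i j = 0) :
    ∀ i, ∑ j, A' i j = ∑ j, A i j := by
  intro i₀
  -- A' is antisymmetric
  have hdiag : ∀ i, A' i i = 0 := by
    intro i
    have := hA'mem i i i
    linarith
  have hanti' : ∀ i j, A' j i = -A' i j := by
    intro i j
    have := hA'mem i j i
    have := hdiag i
    linarith
  have hantiA : ∀ i j, A j i = -A i j := by
    intro i j
    have := congrFun (congrFun hA i) j
    simpa [Matrix.transpose_apply] using this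
  -- test matrix
  set e : Fin n → ℝ := fun i => if i = i₀ then 1 else 0 with he
  set B : Matrix (Fin n) (Fin n) ℝ := fun i j => e i - e j with hB
  have hBmem : ∀ i j k, B i j + B j k = B i k := by
    intro i j k; simp [hB]
  have horth := hA'proj B hBmem
  have hexp : ∀ i j : Fin n, (A i j - A' i j) * B i j
      = (A i j - A' i j) * e i - (A i j - A' i j) * e j := by
    intro i j; simp [hB]; ring
  rw [Finset.sum_congr rfl (fun i _ => Finset.sum_congr rfl (fun j _ => hexp i j))] at horth
  simp only [Finset.sum_sub_distrib] at horth
  have h1 : ∑ i, ∑ j, (A i j - A' i j) * e i = ∑ j, (A i₀ j - A' i₀ j) := by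
    rw [Finset.sum_comm]
    apply Finset.sum_congr rfl
    intro j _
    rw [Finset.sum_eq_single i₀]
    · simp [he]
    · intro b _ hb; simp [he, hb]
    · intro h; simp at h
  have h2 : ∑ i, ∑ j, (A i j - A' i j) * e j = ∑ i, (A i i₀ - A' i i₀) := by
    apply Finset.sum_congr rfl
    intro i _
    rw [Finset.sum_eq_single i₀]
    · simp [he]
    · intro b _ hb; simp [he, hb]
    · intro h; simp at h
  rw [h1, h2] at horth
  have h3 : ∑ i, (A i i₀ - A' i i₀) = -∑ j, (A i₀ j - A' i₀ j) := by
    rw [← Finset.sum_neg_distrib]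
    apply Finset.sum_congr rfl
    intro i _
    rw [hantiA i₀ i, hanti' i₀ i]
    ring
  rw [h3] at horth
  have : ∑ j, (A i₀ j - A' i₀ j) = 0 := by linarith
  rw [Finset.sum_sub_distrib] at this
  linarith
end

section
/- Let n ≥ 1 and let B be an n×n real antisymmetric matrix. Define w ∈ ℝⁿ by w i = (1/n) ∑_j B i j, and define the matrix C by C i j = w i − w j. Then C is additively consistent (C i j + C j k = C i k for all i, j, k) and C is the orthogonal projection of B, with respect to the Frobenius inner product, onto the subspace of additively consistent n×n matrices; equivalently, B − C is orthogonal to every additively consistent matrix. -/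
open Matrix

/-- For an antisymmetric real `n × n` matrix `B` (with `n ≥ 1`), setting
`w i = (1/n) * ∑ j, B i j` and `C i j = w i - w j`, the matrix `C` is additively
consistent and `C` is the orthogonal projection of `B` (w.r.t. the Frobenius inner
product) onto the subspace of additively consistent matrices; equivalently,
`B - C` is Frobenius-orthogonal to every additively consistent matrix. -/
theorem stmt_1 (n : ℕ) (hn : 1 ≤ n) (B : Matrix (Fin n) (Fin n) ℝ)
    (hB : Bᵀ = -B)
    (w : Fin n → ℝ) (hw : ∀ i, w i = (1 / (n : ℝ)) * ∑ j, B i j)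
    (C : Matrix (Fin n) (Fin n) ℝ) (hC : ∀ i j, C i j = w i - w j) :
    (∀ i j k, C i j + C j k = C i k) ∧
    ∀ D : Matrix (Fin n) (Fin n) ℝ, (∀ i j k, D i j + D j k = D i k) →
      ∑ i, ∑ j, (B i j - C i j) * D i j = 0 := by
  have hn0 : (n : ℝ) ≠ 0 := by positivity
  have hBanti : ∀ i j, B j i = - B i j := by
    intro i j
    have := congrFun (congrFun hB i) j
    simpa [Matrix.transpose_apply] using this
  -- total sum of B is zero
  have hwsum : ∑ j, w j = 0 := by
    have h : ∑ j, ∑ k, B j k = 0 := by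
      have h2 : ∑ j, ∑ k, B j k = - ∑ j, ∑ k, B j k := by
        calc ∑ j, ∑ k, B j k = ∑ j, ∑ k, (- B k j) := by
              apply Finset.sum_congr rfl; intro j _
              apply Finset.sum_congr rfl; intro k _
              rw [hBanti k j]
          _ = - ∑ j, ∑ k, B k j := by simp
          _ = - ∑ j, ∑ k, B j k := by rw [Finset.sum_comm]
      linarith
    simp only [hw, ← Finset.mul_sum, h, mul_zero]
  -- row sums of B - C vanish
  have hrow : ∀ i, ∑ j, (B i j - C i j) = 0 := by
    intro i
    have h1 : ∑ j, B i j = (n : ℝ) * w i := by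
      rw [hw i]; field_simp
    have h2 : ∑ j, C i j = (n : ℝ) * w i := by
      simp only [hC]
      rw [Finset.sum_sub_distrib, hwsum, Finset.sum_const, Finset.card_univ,
        Fintype.card_fin, nsmul_eq_mul, sub_zero]
    rw [Finset.sum_sub_distrib, h1, h2, sub_self]
  -- column sums vanish by antisymmetry of B - C
  have hcol : ∀ j, ∑ i, (B i j - C i j) = 0 := by
    intro j
    have h3 : ∑ i, (B i j - C i j) = - ∑ i, (B j i - C j i) := by
      rw [← Finset.sum_neg_distrib]
      apply Finset.sum_congr rfl; intro i _
      rw [hBanti j i, hC, hC]; ring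
    rw [h3, hrow j, neg_zero]
  constructor
  · intro i j k
    simp only [hC]; ring
  · intro D hD
    set k0 : Fin n := ⟨0, hn⟩
    have hDdec : ∀ i j, D i j = D i k0 - D j k0 := by
      intro i j
      have := hD i j k0
      linarith
    calc ∑ i, ∑ j, (B i j - C i j) * D i j
        = ∑ i, ((∑ j, (B i j - C i j)) * D i k0 - ∑ j, (B i j - C i j) * D j k0) := by
          apply Finset.sum_congr rfl; intro i _
          rw [Finset.sum_mul, ← Finset.sum_sub_distrib]
          apply Finset.sum_congr rfl; intro j _
          rw [hDdec i j]; ring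
      _ = - ∑ i, ∑ j, (B i j - C i j) * D j k0 := by
          simp [hrow]
      _ = - ∑ j, (∑ i, (B i j - C i j)) * D j k0 := by
          rw [Finset.sum_comm]
          congr 1
          apply Finset.sum_congr rfl; intro j _
          rw [Finset.sum_mul]
      _ = 0 := by simp [hcol]
end

section
/- Let a, b, c > 0 and let M be the 3×3 reciprocal matrix with rows (1, a, b), (1/a, 1, c), (1/b, 1/c, 1). Let v = ((a·b)^{1/3}, (c/a)^{1/3}, (b·c)^{−1/3}) be the vector of geometric means of the rows of M, and let λ = 1 + (a·c/b)^{1/3} + (b/(a·c))^{1/3}. Then M v = λ v. In particular, for every 3×3 reciprocal positive matrix, the geometric-mean vector of rows is an eigenvector of M corresponding to its principal eigenvalue. -/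
open Matrix

lemma cube_root_eq {x y : ℝ} (hx : 0 ≤ x) (hy : 0 ≤ y) (h : x ^ 3 = y ^ 3) : x = y := by
  rcases lt_trichotomy x y with hlt | he | hgt
  · have := pow_lt_pow_left₀ hlt hx three_ne_zero; linarith
  · exact he
  · have := pow_lt_pow_left₀ hgt hy three_ne_zero; linarith

lemma pow3a {x : ℝ} (hx : 0 < x) : (x ^ ((1:ℝ)/3)) ^ 3 = x := by
  rw [← Real.rpow_natCast (x ^ ((1:ℝ)/3)) 3, ← Real.rpow_mul hx.le]
  norm_num

lemma pow3b {x : ℝ} (hx : 0 < x) : (x ^ (-(1:ℝ)/3)) ^ 3 = x⁻¹ := by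
  rw [← Real.rpow_natCast (x ^ (-(1:ℝ)/3)) 3, ← Real.rpow_mul hx.le]
  norm_num [Real.rpow_neg_one]

lemma key (a b c : ℝ) (ha : 0 < a) (hb : 0 < b) (hc : 0 < c) :
    (!![1, a, b; 1/a, 1, c; 1/b, 1/c, 1] : Matrix (Fin 3) (Fin 3) ℝ).mulVec
        ![(a * b) ^ ((1 : ℝ)/3), (c / a) ^ ((1 : ℝ)/3), (b * c) ^ (-(1 : ℝ)/3)] =
      (1 + (a * c / b) ^ ((1 : ℝ)/3) + (b / (a * c)) ^ ((1 : ℝ)/3)) •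
        ![(a * b) ^ ((1 : ℝ)/3), (c / a) ^ ((1 : ℝ)/3), (b * c) ^ (-(1 : ℝ)/3)] := by
  have h1 : a * (c/a) ^ ((1:ℝ)/3) = (a*c/b) ^ ((1:ℝ)/3) * (a*b) ^ ((1:ℝ)/3) := by
    apply cube_root_eq (by positivity) (by positivity)
    rw [mul_pow, mul_pow, pow3a (by positivity), pow3a (by positivity), pow3a (by positivity)]
    field_simp
  have h2 : b * (b*c) ^ (-(1:ℝ)/3) = (b/(a*c)) ^ ((1:ℝ)/3) * (a*b) ^ ((1:ℝ)/3) := by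
    apply cube_root_eq (by positivity) (by positivity)
    rw [mul_pow, mul_pow, pow3b (by positivity), pow3a (by positivity), pow3a (by positivity)]
    field_simp
  have h3 : 1/a * (a*b) ^ ((1:ℝ)/3) = (b/(a*c)) ^ ((1:ℝ)/3) * (c/a) ^ ((1:ℝ)/3) := by
    apply cube_root_eq (by positivity) (by positivity)
    rw [mul_pow, mul_pow, pow3a (by positivity), pow3a (by positivity), pow3a (by positivity)]
    field_simp
  have h4 : c * (b*c) ^ (-(1:ℝ)/3) = (a*c/b) ^ ((1:ℝ)/3) * (c/a) ^ ((1:ℝ)/3) := by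
    apply cube_root_eq (by positivity) (by positivity)
    rw [mul_pow, mul_pow, pow3b (by positivity), pow3a (by positivity), pow3a (by positivity)]
    field_simp
  have h5 : 1/b * (a*b) ^ ((1:ℝ)/3) = (a*c/b) ^ ((1:ℝ)/3) * (b*c) ^ (-(1:ℝ)/3) := by
    apply cube_root_eq (by positivity) (by positivity)
    rw [mul_pow, mul_pow, pow3a (by positivity), pow3a (by positivity), pow3b (by positivity)]
    field_simp
  have h6 : 1/c * (c/a) ^ ((1:ℝ)/3) = (b/(a*c)) ^ ((1:ℝ)/3) * (b*c) ^ (-(1:ℝ)/3) := by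
    apply cube_root_eq (by positivity) (by positivity)
    rw [mul_pow, mul_pow, pow3a (by positivity), pow3a (by positivity), pow3b (by positivity)]
    field_simp
  funext i
  fin_cases i <;> simp [mulVec, dotProduct, Fin.sum_univ_three, -one_div]
  · rw [h1, h2]; ring
  · rw [h3, h4]; ring
  · rw [h5, h6]; ring

/-- For `a, b, c > 0`, the reciprocal matrix `M` with rows
`(1, a, b)`, `(1/a, 1, c)`, `(1/b, 1/c, 1)` and the geometric-mean vector
`v = ((ab)^(1/3), (c/a)^(1/3), (bc)^(-1/3))` satisfy `M v = λ v` with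
`λ = 1 + (ac/b)^(1/3) + (b/(ac))^(1/3)`.  In particular, for every `3 × 3`
reciprocal positive matrix the geometric-mean vector of its rows is an
eigenvector. -/
theorem stmt_14 (a b c : ℝ) (ha : 0 < a) (hb : 0 < b) (hc : 0 < c)
    (M : Matrix (Fin 3) (Fin 3) ℝ)
    (hM : M = !![1, a, b; 1/a, 1, c; 1/b, 1/c, 1])
    (v : Fin 3 → ℝ)
    (hv : v = ![(a * b) ^ ((1 : ℝ)/3), (c / a) ^ ((1 : ℝ)/3), (b * c) ^ (-(1 : ℝ)/3)])
    (lam : ℝ) (hlam : lam = 1 + (a * c / b) ^ ((1 : ℝ)/3) + (b / (a * c)) ^ ((1 : ℝ)/3)) :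
    M.mulVec v = lam • v ∧
    ∀ N : Matrix (Fin 3) (Fin 3) ℝ, (∀ i j, 0 < N i j) →
      (∀ i j, N j i = 1 / N i j) →
      ∃ μ : ℝ, N.mulVec (fun i => (∏ j, N i j) ^ ((1 : ℝ)/3)) =
        μ • (fun i => (∏ j, N i j) ^ ((1 : ℝ)/3)) := by
  subst hM hv hlam
  refine ⟨key a b c ha hb hc, ?_⟩
  intro N hpos hrec
  have hp := hpos 0 1
  have hq := hpos 0 2
  have hr := hpos 1 2
  have h00 : N 0 0 = 1 := by 
    have h := hrec 0 0
    have h2 := hpos 0 0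
    field_simp at h
    have h3 : (N 0 0 - 1) * (N 0 0 + 1) = 0 := by linear_combination h
    rcases mul_eq_zero.mp h3 with h4 | h4 <;> linarith
  have h11 : N 1 1 = 1 := by 
    have h := hrec 1 1
    have h2 := hpos 1 1
    field_simp at h
    have h3 : (N 1 1 - 1) * (N 1 1 + 1) = 0 := by linear_combination h
    rcases mul_eq_zero.mp h3 with h4 | h4 <;> linarith
  have h22 : N 2 2 = 1 := by 
    have h := hrec 2 2
    have h2 := hpos 2 2
    field_simp at h
    have h3 : (N 2 2 - 1) * (N 2 2 + 1) = 0 := by linear_combination h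
    rcases mul_eq_zero.mp h3 with h4 | h4 <;> linarith
  have h10 : N 1 0 = 1 / N 0 1 := hrec 0 1
  have h20 : N 2 0 = 1 / N 0 2 := hrec 0 2
  have h21 : N 2 1 = 1 / N 1 2 := hrec 1 2
  have hN : N = !![1, N 0 1, N 0 2; 1/(N 0 1), 1, N 1 2; 1/(N 0 2), 1/(N 1 2), 1] := by
    ext i j
    fin_cases i <;> fin_cases j <;>
      simp [h00, h11, h22, h10, h20, h21]
  have hvec : (fun i => (∏ j, N i j) ^ ((1:ℝ)/3)) =
      ![(N 0 1 * N 0 2) ^ ((1:ℝ)/3), (N 1 2 / N 0 1) ^ ((1:ℝ)/3),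
        (N 0 2 * N 1 2) ^ (-(1:ℝ)/3)] := by
    funext i
    fin_cases i <;> simp [Fin.prod_univ_three, h00, h11, h22, h10, h20, h21, -one_div]
    · congr 1
      field_simp
    · rw [neg_div, Real.rpow_neg (by positivity), ← Real.inv_rpow (by positivity)]
      congr 1
      field_simp
  refine ⟨1 + (N 0 1 * N 1 2 / N 0 2) ^ ((1:ℝ)/3) + (N 0 2 / (N 0 1 * N 1 2)) ^ ((1:ℝ)/3), ?_⟩
  rw [hvec]
  conv_lhs => rw [hN]
  exact key (N 0 1) (N 0 2) (N 1 2) hp hq hr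
end

section
/- Let M be the 4×4 matrix with rows (1, 2, 1, 3), (1/2, 1, 1, 1), (1, 1, 1, 2), (1/3, 1, 1/2, 1), and let v ∈ ℝ⁴ be the vector of geometric means of its rows, v = (6^{1/4}, (1/2)^{1/4}, 2^{1/4}, (1/6)^{1/4}). Then there is no real number λ such that M v = λ v; in particular, the geometric-mean vector of a reciprocal 4×4 positive matrix need not be an eigenvector of the matrix. -/
open Matrix

private lemma root4_gt {x q : ℝ} (hx : 0 < x) (h : q ^ 4 < x ^ 4) (hq : 0 ≤ q) : q < x :=
  lt_of_pow_lt_pow_left₀ 4 hx.le h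

private lemma root4_lt {x q : ℝ} (hq : 0 ≤ q) (h : x ^ 4 < q ^ 4) : x < q :=
  lt_of_pow_lt_pow_left₀ 4 hq h

/-- For the `4 × 4` reciprocal matrix `M` with rows `(1, 2, 1, 3)`,
`(1/2, 1, 1, 1)`, `(1, 1, 1, 2)`, `(1/3, 1, 1/2, 1)` and the vector of geometric
means of its rows `v = (6^(1/4), (1/2)^(1/4), 2^(1/4), (1/6)^(1/4))`, there is no
real `λ` with `M v = λ v`: the geometric-mean vector need not be an eigenvector. -/
theorem stmt_15 (M : Matrix (Fin 4) (Fin 4) ℝ)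
    (hM : M = !![1, 2, 1, 3; 1/2, 1, 1, 1; 1, 1, 1, 2; 1/3, 1, 1/2, 1])
    (v : Fin 4 → ℝ)
    (hv : v = ![(6 : ℝ) ^ ((1 : ℝ)/4), ((1 : ℝ)/2) ^ ((1 : ℝ)/4),
      (2 : ℝ) ^ ((1 : ℝ)/4), ((1 : ℝ)/6) ^ ((1 : ℝ)/4)])
    (hgm : ∀ i, v i = (∏ j, M i j) ^ ((1 : ℝ)/4)) :
    ¬ ∃ lam : ℝ, M.mulVec v = lam • v := by
  rintro ⟨lam, h⟩
  set a : ℝ := (6 : ℝ) ^ ((1 : ℝ)/4) with ha'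
  set b : ℝ := ((1 : ℝ)/2) ^ ((1 : ℝ)/4) with hb'
  set c : ℝ := (2 : ℝ) ^ ((1 : ℝ)/4) with hc'
  set d : ℝ := ((1 : ℝ)/6) ^ ((1 : ℝ)/4) with hd'
  have hapos : (0:ℝ) < a := Real.rpow_pos_of_pos (by norm_num) _
  have hbpos : (0:ℝ) < b := Real.rpow_pos_of_pos (by norm_num) _
  have hcpos : (0:ℝ) < c := Real.rpow_pos_of_pos (by norm_num) _
  have hdpos : (0:ℝ) < d := Real.rpow_pos_of_pos (by norm_num) _
  have ha4 : a ^ 4 = 6 := by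
    rw [ha', ← Real.rpow_natCast _ 4, ← Real.rpow_mul (by norm_num)]; norm_num
  have hb4 : b ^ 4 = 1/2 := by
    rw [hb', ← Real.rpow_natCast _ 4, ← Real.rpow_mul (by norm_num)]; norm_num
  have hc4 : c ^ 4 = 2 := by
    rw [hc', ← Real.rpow_natCast _ 4, ← Real.rpow_mul (by norm_num)]; norm_num
  have hd4 : d ^ 4 = 1/6 := by
    rw [hd', ← Real.rpow_natCast _ 4, ← Real.rpow_mul (by norm_num)]; norm_num
  have h1 := congrFun h 1
  have h2 := congrFun h 2
  simp [hM, hv, Matrix.mulVec, dotProduct, Fin.sum_univ_four] at h1 h2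
  -- h1 : a/2 + b + c + d = lam * b ; h2 : a + b + c + 2d = lam * c (up to form)
  -- bounds
  have hal : (1.565 : ℝ) < a := root4_gt hapos (by rw [ha4]; norm_num) (by norm_num)
  have hau : a < (1.5652 : ℝ) := root4_lt (by norm_num) (by rw [ha4]; norm_num)
  have hbl : (0.8408 : ℝ) < b := root4_gt hbpos (by rw [hb4]; norm_num) (by norm_num)
  have hbu : b < (0.8409 : ℝ) := root4_lt (by norm_num) (by rw [hb4]; norm_num)
  have hcl : (1.1892 : ℝ) < c := root4_gt hcpos (by rw [hc4]; norm_num) (by norm_num)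
  have hcu : c < (1.1893 : ℝ) := root4_lt (by norm_num) (by rw [hc4]; norm_num)
  have hdl : (0.6389 : ℝ) < d := root4_gt hdpos (by rw [hd4]; norm_num) (by norm_num)
  have hdu : d < (0.6390 : ℝ) := root4_lt (by norm_num) (by rw [hd4]; norm_num)
  have key : c * (a/2 + b + c + d) = b * (a + b + c + 2*d) := by
    have e1 : a/2 + b + c + d = lam * b := by linarith [h1]
    have e2 : a + b + c + 2*d = lam * c := by linarith [h2]
    rw [e1, e2]; ring
  nlinarith [mul_pos hbpos hcpos, mul_pos hapos hbpos, mul_pos hapos hcpos,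
    mul_lt_mul_of_pos_left hau hcpos, mul_lt_mul_of_pos_left hal hbpos]
end
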